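/- Let T > 0 be real and define G : ℂ → ℂ by G(s) = 2 · exp(−iπs) · exp(s · log(T/π)) · cos(πs/2) · ζ_R(s), where ζ_R is the Riemann zeta function and log(T/π) is the real logarithm. Then G is differentiable at 0, its derivative at 0 equals iπ − log(2T), and consequently exp(−G′(0)) = −2T. -/

import Mathlib

/-!
Merging the two exponentials, `G s = 2 exp((log (T/π) - iπ) s) cos(πs/2) ζ(s)`. At `s = 0`
the cosine has value `1` and derivative `0`, while `ζ(0) = -1/2` and `ζ'(0) = -log(2π)/2`,
so the product rule gives `G'(0) = iπ - log(T/π) - log(2π) = iπ - log(2T)`; the factor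
`exp(-iπ) = -1` is what makes the determinant negative.
-/

open Complex Real

theorem hasDerivAt_riemannZeta_zero :
    HasDerivAt riemannZeta (-Real.log (2 * π) / 2) 0 := by
  have h := (differentiableAt_riemannZeta zero_ne_one).hasDerivAt
  rwa [deriv_riemannZeta_zero, ← ofReal_ofNat, ← ofReal_mul, ← ofReal_log (by positivity)] at h

theorem hasDerivAt_cos_pi_mul_div_two_zero :
    HasDerivAt (fun s : ℂ => cos (π * s / 2)) 0 0 := by
  simpa using ((hasDerivAt_id (0 : ℂ)).const_mul (π : ℂ)).div_const 2 |>.ccos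

theorem hasDerivAt_exp_mul_cos_mul_riemannZeta_zero (a : ℂ) :
    HasDerivAt (fun s => 2 * exp (a * s) * cos (π * s / 2) * riemannZeta s)
      (-a - Real.log (2 * π)) 0 := by
  have hexp : HasDerivAt (fun s : ℂ => exp (a * s)) a 0 := by
    simpa using ((hasDerivAt_id (0 : ℂ)).const_mul a).cexp
  refine (((hexp.const_mul 2).fun_mul hasDerivAt_cos_pi_mul_div_two_zero).fun_mul
    hasDerivAt_riemannZeta_zero).congr_deriv ?_
  simp only [mul_zero, Complex.exp_zero, zero_div, Complex.cos_zero, riemannZeta_zero]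
  ring

theorem exp_neg_I_mul_pi_sub_log {x : ℝ} (hx : 0 < x) :
    exp (-(I * π - Real.log x)) = -x := by
  rw [neg_sub, sub_eq_add_neg, Complex.exp_add, ← ofReal_exp, Real.exp_log hx, mul_comm I,
    Complex.exp_neg, exp_pi_mul_I]
  simp

/-- The continued spectral zeta function
`G(s) = 2 exp(−iπs) exp(s log(T/π)) cos(πs/2) ζ_R(s)` of the undamped wave operator
(branch cut on the positive real axis) is differentiable at `0`, has
`G′(0) = iπ − log(2T)`, and the spectral determinant is `exp(−G′(0)) = −2T`. -/
theorem dwe_determinant_positive_axis_cut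
    (T : ℝ) (hT : 0 < T) (G : ℂ → ℂ)
    (hG : ∀ s : ℂ, G s =
      2 * Complex.exp (-(Complex.I * Real.pi * s)) *
        Complex.exp (s * Real.log (T / Real.pi)) * Complex.cos (Real.pi * s / 2) *
        riemannZeta s) :
    DifferentiableAt ℂ G 0 ∧
      deriv G 0 = Complex.I * Real.pi - Real.log (2 * T) ∧
      Complex.exp (-(deriv G 0)) = -(2 * T) := by
  have hlog : Real.log (T / π) + Real.log (2 * π) = Real.log (2 * T) := by
    rw [← Real.log_mul (by positivity) (by positivity)]
    field_simp
  have hG' : G = fun s => 2 * exp ((Real.log (T / π) - I * π) * s) * cos (π * s / 2) *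
      riemannZeta s := by
    funext s
    rw [hG, mul_assoc 2, ← Complex.exp_add]
    ring_nf
  have hD : HasDerivAt G (I * π - Real.log (2 * T)) 0 := by
    rw [hG', ← hlog]
    convert hasDerivAt_exp_mul_cos_mul_riemannZeta_zero _ using 1
    push_cast
    ring
  refine ⟨hD.differentiableAt, hD.deriv, ?_⟩
  rw [hD.deriv, ← ofReal_ofNat, ← ofReal_mul]
  exact exp_neg_I_mul_pi_sub_log (by positivity)
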